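/- arXiv:1803.08760 — 6 statements merged into one kernel-verified Lean document; each statement's English description precedes it below -/
import Mathlib

section
/- Let u₁, u₂, v₁, v₂ ∈ ℝ³ be unit vectors and let O := (1/√2)((u₁·σ) ⊗ (v₁·σ) + (u₂·σ) ⊗ (v₂·σ)). Then O² = (1 + (u₁ ⬝ u₂)(v₁ ⬝ v₂)) • (1 ⊗ 1) − ((u₁ × u₂)·σ) ⊗ ((v₁ × v₂)·σ), where ⬝ is the Euclidean inner product and × is the cross product in ℝ³. -/
open Matrix Kronecker Complex

/-- The Pauli matrix σ₁. -/
noncomputable def σ1 : Matrix (Fin 2) (Fin 2) ℂ := !![0, 1; 1, 0]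

/-- The Pauli matrix σ₂. -/
noncomputable def σ2 : Matrix (Fin 2) (Fin 2) ℂ := !![0, -Complex.I; Complex.I, 0]

/-- The Pauli matrix σ₃. -/
noncomputable def σ3 : Matrix (Fin 2) (Fin 2) ℂ := !![1, 0; 0, -1]

/-- For `a ∈ ℝ³`, the observable `a·σ = a₁σ₁ + a₂σ₂ + a₃σ₃`. -/
noncomputable def pauliDot (a : Fin 3 → ℝ) : Matrix (Fin 2) (Fin 2) ℂ :=
  (a 0 : ℂ) • σ1 + (a 1 : ℂ) • σ2 + (a 2 : ℂ) • σ3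

/-- The fundamental Pauli algebra identity `(a·σ)(b·σ) = (a⬝b)·1 + i (a×b)·σ`. -/
lemma pauliDot_mul (a b : Fin 3 → ℝ) :
    pauliDot a * pauliDot b =
      ((a ⬝ᵥ b : ℝ) : ℂ) • 1 + Complex.I • pauliDot (crossProduct a b) := by
  ext i j
  fin_cases i <;> fin_cases j <;>
    simp [pauliDot, σ1, σ2, σ3, crossProduct, Matrix.mul_apply, Fin.sum_univ_succ,
      dotProduct, Matrix.one_apply, Complex.ext_iff] <;> ring_nf <;>
    simp [Complex.ext_iff]

lemma pauliDot_neg (a : Fin 3 → ℝ) : pauliDot (-a) = (-1 : ℂ) • pauliDot a := by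
  simp only [pauliDot, Pi.neg_apply, Complex.ofReal_neg]
  module

/-- For unit vectors `u₁, u₂, v₁, v₂ ∈ ℝ³`, the square of the steering operator
`O = (1/√2)((u₁·σ) ⊗ (v₁·σ) + (u₂·σ) ⊗ (v₂·σ))` equals
`(1 + (u₁⬝u₂)(v₁⬝v₂)) • (1 ⊗ 1) − ((u₁ × u₂)·σ) ⊗ ((v₁ × v₂)·σ)`. -/
theorem steering_op_sq_pauli (u₁ u₂ v₁ v₂ : Fin 3 → ℝ)
    (hu₁ : u₁ ⬝ᵥ u₁ = 1) (hu₂ : u₂ ⬝ᵥ u₂ = 1) (hv₁ : v₁ ⬝ᵥ v₁ = 1) (hv₂ : v₂ ⬝ᵥ v₂ = 1)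
    (O : Matrix (Fin 2 × Fin 2) (Fin 2 × Fin 2) ℂ)
    (hO : O = ((1 / Real.sqrt 2 : ℝ) : ℂ) •
      (pauliDot u₁ ⊗ₖ pauliDot v₁ + pauliDot u₂ ⊗ₖ pauliDot v₂)) :
    O ^ 2 = ((1 + (u₁ ⬝ᵥ u₂) * (v₁ ⬝ᵥ v₂) : ℝ) : ℂ) •
        ((1 : Matrix (Fin 2) (Fin 2) ℂ) ⊗ₖ (1 : Matrix (Fin 2) (Fin 2) ℂ))
      - (pauliDot (crossProduct u₁ u₂)) ⊗ₖ (pauliDot (crossProduct v₁ v₂)) := by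
  have hc : ((1 / Real.sqrt 2 : ℝ) : ℂ) * ((1 / Real.sqrt 2 : ℝ) : ℂ) = (1/2 : ℂ) := by
    rw [← Complex.ofReal_mul, div_mul_div_comm, Real.mul_self_sqrt (by norm_num)]
    norm_num
  have h21 : crossProduct u₂ u₁ = -(crossProduct u₁ u₂) := (cross_anticomm u₁ u₂).symm
  have h21' : crossProduct v₂ v₁ = -(crossProduct v₁ v₂) := (cross_anticomm v₁ v₂).symm
  have hd : u₂ ⬝ᵥ u₁ = u₁ ⬝ᵥ u₂ := dotProduct_comm _ _
  have hd' : v₂ ⬝ᵥ v₁ = v₁ ⬝ᵥ v₂ := dotProduct_comm _ _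
  rw [hO, pow_two, smul_mul_smul_comm, hc, mul_add, add_mul, add_mul,
    ← Matrix.mul_kronecker_mul, ← Matrix.mul_kronecker_mul,
    ← Matrix.mul_kronecker_mul, ← Matrix.mul_kronecker_mul]
  simp only [pauliDot_mul]
  rw [hu₁, hu₂, hv₁, hv₂, h21, h21', hd, hd', pauliDot_neg, pauliDot_neg]
  simp only [cross_self]
  have hz : pauliDot 0 = 0 := by simp [pauliDot]
  rw [hz]
  set E := pauliDot (crossProduct u₁ u₂)
  set F := pauliDot (crossProduct v₁ v₂)
  simp only [Matrix.add_kronecker, Matrix.kronecker_add, Matrix.smul_kronecker,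
    Matrix.kronecker_smul, smul_smul, smul_zero, zero_add, add_zero]
  push_cast
  match_scalars <;> simp [Complex.I_sq] <;> ring_nf
end

section
/- Let u₁, u₂ ∈ ℝ³ be unit vectors and let v₁, v₂ ∈ ℝ³ be orthonormal vectors (unit vectors with v₁ ⬝ v₂ = 0). Let O := (1/√2)((u₁·σ) ⊗ (v₁·σ) + (u₂·σ) ⊗ (v₂·σ)). Then O² = 1 ⊗ 1 − ((u₁ × u₂)·σ) ⊗ ((v₁ × v₂)·σ), where × is the cross product in ℝ³. -/
open Matrix Kronecker Complex

lemma kron_neg_left (A B : Matrix (Fin 2) (Fin 2) ℂ) : (-A) ⊗ₖ B = -(A ⊗ₖ B) := by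
  ext ⟨i, k⟩ ⟨j, l⟩; simp [Matrix.kroneckerMap]

lemma kron_neg_right (A B : Matrix (Fin 2) (Fin 2) ℂ) : A ⊗ₖ (-B) = -(A ⊗ₖ B) := by
  ext ⟨i, k⟩ ⟨j, l⟩; simp [Matrix.kroneckerMap]

lemma pauli_mul (a b : Fin 3 → ℝ) :
    pauliDot a * pauliDot b =
      ((a ⬝ᵥ b : ℝ) : ℂ) • (1 : Matrix (Fin 2) (Fin 2) ℂ)
        + Complex.I • pauliDot (crossProduct a b) := by
  ext i j
  fin_cases i <;> fin_cases j <;>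
    simp [pauliDot, σ1, σ2, σ3, crossProduct, dotProduct, Fin.sum_univ_three,
      Matrix.mul_apply, Matrix.one_apply] <;> ring_nf <;>
    simp [Complex.ext_iff] <;> ring

/-- For unit vectors `u₁, u₂ ∈ ℝ³` and orthonormal `v₁, v₂ ∈ ℝ³`, the square of the steering
operator `O = (1/√2)((u₁·σ) ⊗ (v₁·σ) + (u₂·σ) ⊗ (v₂·σ))` equals
`1 ⊗ 1 − ((u₁ × u₂)·σ) ⊗ ((v₁ × v₂)·σ)`. -/
theorem steering_op_sq_orthonormal (u₁ u₂ v₁ v₂ : Fin 3 → ℝ)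
    (hu₁ : u₁ ⬝ᵥ u₁ = 1) (hu₂ : u₂ ⬝ᵥ u₂ = 1) (hv₁ : v₁ ⬝ᵥ v₁ = 1) (hv₂ : v₂ ⬝ᵥ v₂ = 1)
    (hv₁₂ : v₁ ⬝ᵥ v₂ = 0)
    (O : Matrix (Fin 2 × Fin 2) (Fin 2 × Fin 2) ℂ)
    (hO : O = ((1 / Real.sqrt 2 : ℝ) : ℂ) •
      (pauliDot u₁ ⊗ₖ pauliDot v₁ + pauliDot u₂ ⊗ₖ pauliDot v₂)) :
    O ^ 2 = (1 : Matrix (Fin 2) (Fin 2) ℂ) ⊗ₖ (1 : Matrix (Fin 2) (Fin 2) ℂ)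
      - (pauliDot (crossProduct u₁ u₂)) ⊗ₖ (pauliDot (crossProduct v₁ v₂)) := by
  have hv₂₁ : v₂ ⬝ᵥ v₁ = 0 := by rwa [dotProduct_comm]
  have hcc : crossProduct v₂ v₁ = -crossProduct v₁ v₂ := by
    ext i; fin_cases i <;> simp [crossProduct] <;> ring
  have hc : ((1 / Real.sqrt 2 : ℝ) : ℂ) * ((1 / Real.sqrt 2 : ℝ) : ℂ) = (1/2 : ℂ) := by
    rw [← Complex.ofReal_mul, div_mul_div_comm, one_mul,
      Real.mul_self_sqrt (by norm_num : (0:ℝ) ≤ 2)]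
    norm_num
  have hneg : pauliDot (-crossProduct v₁ v₂) = -pauliDot (crossProduct v₁ v₂) := by
    simp [pauliDot]; abel
  rw [hO, sq, smul_mul_smul_comm, mul_add, add_mul, add_mul,
    ← Matrix.mul_kronecker_mul, ← Matrix.mul_kronecker_mul,
    ← Matrix.mul_kronecker_mul, ← Matrix.mul_kronecker_mul]
  simp only [pauli_mul, hu₁, hu₂, hv₁, hv₂, hv₁₂, hv₂₁, hcc, hneg, hc]
  have hself : ∀ w : Fin 3 → ℝ, crossProduct w w = 0 := by
    intro w; ext i; fin_cases i <;> simp [crossProduct] <;> ring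
  have h0 : pauliDot 0 = 0 := by simp [pauliDot]
  have hccu : crossProduct u₂ u₁ = -crossProduct u₁ u₂ := by
    ext i; fin_cases i <;> simp [crossProduct] <;> ring
  have hnegu : pauliDot (-crossProduct u₁ u₂) = -pauliDot (crossProduct u₁ u₂) := by
    simp [pauliDot]; abel
  simp only [hself, h0, hccu, hnegu, Complex.ofReal_one, Complex.ofReal_zero, one_smul,
    zero_smul, smul_zero, add_zero, zero_add, smul_neg, smul_add,
    Matrix.add_kronecker, Matrix.smul_kronecker, Matrix.kronecker_smul,
    kron_neg_left, kron_neg_right, smul_smul, Complex.I_mul_I, neg_neg]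
  have hd : (u₂ ⬝ᵥ u₁ : ℝ) = (u₁ ⬝ᵥ u₂ : ℝ) := dotProduct_comm _ _
  rw [hd]
  module
end

section
/- For α ∈ ℝ let ψ_α := cos α • e₍₀,₀₎ + sin α • e₍₁,₁₎ ∈ ℂ^(Fin 2 × Fin 2). Let a := (sin θᵃ cos φᵃ, sin θᵃ sin φᵃ, cos θᵃ) and b := (sin θᵇ cos φᵇ, sin θᵇ sin φᵇ, cos θᵇ) ∈ ℝ³ for real angles θᵃ, φᵃ, θᵇ, φᵇ. Then ⟨ψ_α, ((a·σ) ⊗ (b·σ)) ψ_α⟩ = cos θᵃ cos θᵇ + cos(φᵃ + φᵇ) sin θᵃ sin θᵇ sin(2α). -/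
open Matrix Kronecker Complex

/-- The pure two-qubit state `ψ_α = cos α |00⟩ + sin α |11⟩` in Schmidt form. -/
noncomputable def schmidtState (α : ℝ) : (Fin 2 × Fin 2) → ℂ :=
  Real.cos α • (Pi.single ((0 : Fin 2), (0 : Fin 2)) (1 : ℂ) : (Fin 2 × Fin 2) → ℂ)
    + Real.sin α • (Pi.single ((1 : Fin 2), (1 : Fin 2)) (1 : ℂ) : (Fin 2 × Fin 2) → ℂ)

/-- The expectation value of `(a·σ) ⊗ (b·σ)` in the state `ψ_α = cos α |00⟩ + sin α |11⟩`, where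
`a` and `b` are the unit vectors with polar angles `(θᵃ, φᵃ)` and `(θᵇ, φᵇ)`, equals
`cos θᵃ cos θᵇ + cos(φᵃ + φᵇ) sin θᵃ sin θᵇ sin(2α)`. -/
theorem schmidt_expectation_angles (α θa φa θb φb : ℝ)
    (a b : Fin 3 → ℝ)
    (ha : a = ![Real.sin θa * Real.cos φa, Real.sin θa * Real.sin φa, Real.cos θa])
    (hb : b = ![Real.sin θb * Real.cos φb, Real.sin θb * Real.sin φb, Real.cos θb]) :
    star (schmidtState α) ⬝ᵥ ((pauliDot a ⊗ₖ pauliDot b).mulVec (schmidtState α))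
      = ((Real.cos θa * Real.cos θb
          + Real.cos (φa + φb) * Real.sin θa * Real.sin θb * Real.sin (2 * α) : ℝ) : ℂ) := by
  subst ha hb
  simp only [schmidtState, pauliDot, σ1, σ2, σ3, dotProduct, mulVec, Fintype.sum_prod_type,
    Fin.sum_univ_two, kroneckerMap_apply, Pi.add_apply, Pi.smul_apply, Pi.single_apply,
    Pi.star_apply, Prod.mk.injEq, Matrix.add_apply, Matrix.smul_apply, Matrix.cons_val',
    Matrix.cons_val_zero, Matrix.cons_val_one, Matrix.head_cons, Matrix.empty_val',
    Matrix.cons_val_fin_one, Matrix.head_fin_const, Matrix.cons_val_two, Matrix.tail_cons]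
  simp only [Real.cos_add, Real.sin_two_mul, Complex.ext_iff, Complex.add_re, Complex.add_im,
    Complex.mul_re, Complex.mul_im, Complex.ofReal_re, Complex.ofReal_im, smul_eq_mul]
  norm_num [Complex.cos_ofReal_re, Complex.sin_ofReal_re]
  constructor
  · linear_combination Real.cos θa * Real.cos θb * Real.sin_sq_add_cos_sq α
  · ring
end

section
/- Let n ≥ 1, let u₁,…,uₙ, v₁,…,vₙ ∈ ℝ³ be arbitrary vectors, with uᵢ = (uᵢ₁,uᵢ₂,uᵢ₃) and vᵢ = (vᵢ₁,vᵢ₂,vᵢ₃), and let Oₙ := (1/√n) Σᵢ₌₁ⁿ (uᵢ·σ) ⊗ (vᵢ·σ). For α ∈ ℝ let ψ_α := cos α • e₍₀,₀₎ + sin α • e₍₁,₁₎ ∈ ℂ^(Fin 2 × Fin 2). Then ⟨ψ_α, Oₙ ψ_α⟩ = (1/√n) Σᵢ₌₁ⁿ [uᵢ₃vᵢ₃ + (uᵢ₁vᵢ₁ − uᵢ₂vᵢ₂)·sin(2α)]. -/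
open Matrix Kronecker Complex

lemma key (a b : Fin 3 → ℝ) (α : ℝ) :
    star (schmidtState α) ⬝ᵥ ((pauliDot a ⊗ₖ pauliDot b).mulVec (schmidtState α))
      = ((a 2 * b 2 + (a 0 * b 0 - a 1 * b 1) * Real.sin (2 * α) : ℝ) : ℂ) := by
  simp only [schmidtState, pauliDot, σ1, σ2, σ3, dotProduct, mulVec,
    Fintype.sum_prod_type, Fin.sum_univ_two, kroneckerMap_apply,
    Pi.add_apply, Pi.smul_apply, Pi.single_apply, Matrix.add_apply,
    Matrix.smul_apply, Matrix.cons_val', Matrix.cons_val_zero, Matrix.cons_val_one,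
    Matrix.head_cons, Matrix.empty_val', Matrix.cons_val_fin_one, Matrix.head_fin_const,
    smul_eq_mul, Pi.star_apply, star_add, star_mul', Real.sin_two_mul]
  norm_num [Complex.ext_iff]
  ring_nf
  simp [Complex.ext_iff]
  ring_nf
  rw [Complex.cos_ofReal_re, Complex.sin_ofReal_re]
  linear_combination (a 2 * b 2) * (Real.sin_sq_add_cos_sq α)

lemma dot_sum' {m ι : Type*} [Fintype m] (s : Finset ι)
    (v : m → ℂ) (w : ι → m → ℂ) :
    v ⬝ᵥ (∑ i ∈ s, w i) = ∑ i ∈ s, v ⬝ᵥ w i := by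
  simp only [dotProduct, Finset.sum_apply, Finset.mul_sum]
  exact Finset.sum_comm

lemma sum_mulVec' {m ι : Type*} [Fintype m] (s : Finset ι)
    (M : ι → Matrix m m ℂ) (x : m → ℂ) :
    (∑ i ∈ s, M i) *ᵥ x = ∑ i ∈ s, M i *ᵥ x := by
  ext j
  simp only [Matrix.mulVec, dotProduct, Matrix.sum_apply, Finset.sum_apply, Finset.sum_mul]
  exact Finset.sum_comm

/-- The expectation value of the `n`-settings linear steering operator
`Oₙ = (1/√n) Σᵢ (uᵢ·σ) ⊗ (vᵢ·σ)` in the state `ψ_α = cos α |00⟩ + sin α |11⟩` equals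
`(1/√n) Σᵢ [uᵢ₃vᵢ₃ + (uᵢ₁vᵢ₁ − uᵢ₂vᵢ₂) sin(2α)]`. -/
theorem schmidt_expectation_n_settings (n : ℕ) (hn : 1 ≤ n)
    (u v : Fin n → Fin 3 → ℝ) (α : ℝ)
    (On : Matrix (Fin 2 × Fin 2) (Fin 2 × Fin 2) ℂ)
    (hOn : On = ((1 / Real.sqrt n : ℝ) : ℂ) • ∑ i, pauliDot (u i) ⊗ₖ pauliDot (v i)) :
    star (schmidtState α) ⬝ᵥ (On.mulVec (schmidtState α))
      = (((1 / Real.sqrt n) * ∑ i, (u i 2 * v i 2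
          + (u i 0 * v i 0 - u i 1 * v i 1) * Real.sin (2 * α)) : ℝ) : ℂ) := by
  subst hOn
  rw [Matrix.smul_mulVec, dotProduct_smul, sum_mulVec' Finset.univ _ _, dot_sum' Finset.univ _ _]
  simp only [key]
  push_cast
  rw [smul_eq_mul, Finset.mul_sum]
end

section
/- Let n ≥ 1, let u₁,…,uₙ, v₁,…,vₙ ∈ ℝ³ be arbitrary vectors, and let Oₙ := (1/√n) Σᵢ₌₁ⁿ (uᵢ·σ) ⊗ (vᵢ·σ). For α ∈ ℝ let ψ_α := cos α • e₍₀,₀₎ + sin α • e₍₁,₁₎ ∈ ℂ^(Fin 2 × Fin 2), and let φ₊ := (e₍₀,₀₎ + e₍₁,₁₎)/√2 and φ₋ := (e₍₀,₀₎ − e₍₁,₁₎)/√2. Then for every α ∈ ℝ, |⟨ψ_α, Oₙ ψ_α⟩| ≤ max(|⟨φ₊, Oₙ φ₊⟩|, |⟨φ₋, Oₙ φ₋⟩|). -/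
open Matrix Kronecker Complex

/-!
For `ψ = c|00⟩ + s|11⟩` with `c, s` real, only four entries of an operator `M` enter the
expectation: `⟨ψ, Mψ⟩ = c² M₀₀,₀₀ + s² M₁₁,₁₁ + cs (M₀₀,₁₁ + M₁₁,₀₀)`. For every product
`(a·σ) ⊗ (b·σ)` the two diagonal corners agree (both equal `a₃b₃`), so writing `x` for that corner
and `y` for half the off-diagonal sum, the expectation is `x + sin 2α · y` in `ψ_α` and `x ± y`
in `φ±`. As `x + t y` with `|t| ≤ 1` lies on the segment from `x + y` to `x - y`, convexity of the
norm finishes the proof.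
-/

theorem norm_add_smul_le_max {E : Type*} [SeminormedAddCommGroup E] [NormedSpace ℝ E]
    (x y : E) {t : ℝ} (ht : |t| ≤ 1) : ‖x + t • y‖ ≤ max ‖x + y‖ ‖x - y‖ := by
  obtain ⟨ht₁, ht₂⟩ := abs_le.mp ht
  have hcomb : ((1 + t) / 2) • (x + y) + ((1 - t) / 2) • (x - y) = x + t • y := by module
  rw [← hcomb]
  exact (convexOn_norm convex_univ).le_on_segment' trivial trivial (by linarith) (by linarith)
    (by ring)

theorem star_dotProduct_mulVec_smul_single_add_smul_single {ι : Type*} [Fintype ι]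
    [DecidableEq ι] (M : Matrix ι ι ℂ) (i j : ι) (c s : ℝ) :
    star (c • (Pi.single i 1 : ι → ℂ) + s • (Pi.single j 1 : ι → ℂ)) ⬝ᵥ
        M *ᵥ (c • (Pi.single i 1 : ι → ℂ) + s • (Pi.single j 1 : ι → ℂ))
      = c ^ 2 * M i i + s ^ 2 * M j j + c * s * (M i j + M j i) := by
  simp only [star_add, star_smul, star_trivial, ← Pi.single_star, star_one, mulVec_add,
    mulVec_smul, mulVec_single_one, add_dotProduct, dotProduct_add, smul_dotProduct,
    dotProduct_smul, single_one_dotProduct, col_apply, Complex.real_smul]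
  ring

noncomputable def bellPhiPlus : (Fin 2 × Fin 2) → ℂ :=
  (Real.sqrt 2)⁻¹ • ((Pi.single ((0 : Fin 2), (0 : Fin 2)) (1 : ℂ) : (Fin 2 × Fin 2) → ℂ)
    + (Pi.single ((1 : Fin 2), (1 : Fin 2)) (1 : ℂ) : (Fin 2 × Fin 2) → ℂ))

noncomputable def bellPhiMinus : (Fin 2 × Fin 2) → ℂ :=
  (Real.sqrt 2)⁻¹ • ((Pi.single ((0 : Fin 2), (0 : Fin 2)) (1 : ℂ) : (Fin 2 × Fin 2) → ℂ)
    - (Pi.single ((1 : Fin 2), (1 : Fin 2)) (1 : ℂ) : (Fin 2 × Fin 2) → ℂ))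

theorem norm_expectation_schmidtState_le_max (M : Matrix (Fin 2 × Fin 2) (Fin 2 × Fin 2) ℂ)
    (hM : M (1, 1) (1, 1) = M (0, 0) (0, 0)) (α : ℝ) :
    ‖star (schmidtState α) ⬝ᵥ M *ᵥ schmidtState α‖
      ≤ max ‖star bellPhiPlus ⬝ᵥ M *ᵥ bellPhiPlus‖ ‖star bellPhiMinus ⬝ᵥ M *ᵥ bellPhiMinus‖ := by
  set x := M (0, 0) (0, 0)
  set y := (M (0, 0) (1, 1) + M (1, 1) (0, 0)) / 2
  have hw : (((Real.sqrt 2)⁻¹ : ℝ) : ℂ) ^ 2 = 1 / 2 := by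
    rw [← Complex.ofReal_pow, inv_pow, Real.sq_sqrt zero_le_two]
    push_cast
    ring
  have hψ : star (schmidtState α) ⬝ᵥ M *ᵥ schmidtState α = x + Real.sin (2 * α) • y := by
    rw [schmidtState, star_dotProduct_mulVec_smul_single_add_smul_single, hM, Real.sin_two_mul,
      Complex.real_smul]
    push_cast
    linear_combination x * Complex.cos_sq_add_sin_sq (α : ℂ)
  have hφp : star bellPhiPlus ⬝ᵥ M *ᵥ bellPhiPlus = x + y := by
    rw [bellPhiPlus, smul_add, star_dotProduct_mulVec_smul_single_add_smul_single, hM]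
    linear_combination (2 * x + 2 * y) * hw
  have hφm : star bellPhiMinus ⬝ᵥ M *ᵥ bellPhiMinus = x - y := by
    rw [bellPhiMinus, smul_sub, sub_eq_add_neg, ← neg_smul,
      star_dotProduct_mulVec_smul_single_add_smul_single, hM, Complex.ofReal_neg]
    linear_combination (2 * x - 2 * y) * hw
  rw [hψ, hφp, hφm]
  exact norm_add_smul_le_max x y (Real.abs_sin_le_one _)

theorem pauliDot_apply_one_one (a : Fin 3 → ℝ) : pauliDot a 1 1 = -pauliDot a 0 0 := by
  simp [pauliDot, σ1, σ2, σ3]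

theorem kronecker_pauliDot_apply_one_one (a b : Fin 3 → ℝ) :
    (pauliDot a ⊗ₖ pauliDot b) (1, 1) (1, 1) = (pauliDot a ⊗ₖ pauliDot b) (0, 0) (0, 0) := by
  simp only [kroneckerMap_apply, pauliDot_apply_one_one, neg_mul_neg]

theorem schmidt_expectation_bounded_by_max_entangled_general (n : ℕ)
    (u v : Fin n → Fin 3 → ℝ)
    (On : Matrix (Fin 2 × Fin 2) (Fin 2 × Fin 2) ℂ)
    (hOn : On = ((1 / Real.sqrt n : ℝ) : ℂ) • ∑ i, pauliDot (u i) ⊗ₖ pauliDot (v i))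
    (φp φm : (Fin 2 × Fin 2) → ℂ)
    (hφp : φp = (Real.sqrt 2)⁻¹ •
      ((Pi.single ((0 : Fin 2), (0 : Fin 2)) (1 : ℂ) : (Fin 2 × Fin 2) → ℂ)
        + (Pi.single ((1 : Fin 2), (1 : Fin 2)) (1 : ℂ) : (Fin 2 × Fin 2) → ℂ)))
    (hφm : φm = (Real.sqrt 2)⁻¹ •
      ((Pi.single ((0 : Fin 2), (0 : Fin 2)) (1 : ℂ) : (Fin 2 × Fin 2) → ℂ)
        - (Pi.single ((1 : Fin 2), (1 : Fin 2)) (1 : ℂ) : (Fin 2 × Fin 2) → ℂ))) :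
    ∀ α : ℝ, ‖star (schmidtState α) ⬝ᵥ (On.mulVec (schmidtState α))‖
      ≤ max ‖star φp ⬝ᵥ (On.mulVec φp)‖
          ‖star φm ⬝ᵥ (On.mulVec φm)‖ := by
  subst hOn hφp hφm
  refine norm_expectation_schmidtState_le_max _ ?_
  simp only [Matrix.smul_apply, Matrix.sum_apply, kronecker_pauliDot_apply_one_one]

/-- The magnitude of the expectation of the `n`-settings linear steering operator in any Schmidt
state `ψ_α` is bounded by its magnitude in one of the two maximally entangled states
`φ₊ = (|00⟩ + |11⟩)/√2` and `φ₋ = (|00⟩ − |11⟩)/√2`. -/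
theorem schmidt_expectation_bounded_by_max_entangled (n : ℕ) (hn : 1 ≤ n)
    (u v : Fin n → Fin 3 → ℝ)
    (On : Matrix (Fin 2 × Fin 2) (Fin 2 × Fin 2) ℂ)
    (hOn : On = ((1 / Real.sqrt n : ℝ) : ℂ) • ∑ i, pauliDot (u i) ⊗ₖ pauliDot (v i))
    (φp φm : (Fin 2 × Fin 2) → ℂ)
    (hφp : φp = (Real.sqrt 2)⁻¹ •
      ((Pi.single ((0 : Fin 2), (0 : Fin 2)) (1 : ℂ) : (Fin 2 × Fin 2) → ℂ)
        + (Pi.single ((1 : Fin 2), (1 : Fin 2)) (1 : ℂ) : (Fin 2 × Fin 2) → ℂ)))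
    (hφm : φm = (Real.sqrt 2)⁻¹ •
      ((Pi.single ((0 : Fin 2), (0 : Fin 2)) (1 : ℂ) : (Fin 2 × Fin 2) → ℂ)
        - (Pi.single ((1 : Fin 2), (1 : Fin 2)) (1 : ℂ) : (Fin 2 × Fin 2) → ℂ))) :
    ∀ α : ℝ, ‖star (schmidtState α) ⬝ᵥ (On.mulVec (schmidtState α))‖
      ≤ max ‖star φp ⬝ᵥ (On.mulVec φp)‖
          ‖star φm ⬝ᵥ (On.mulVec φm)‖ :=
  schmidt_expectation_bounded_by_max_entangled_general n u v On hOn φp φm hφp hφm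
end

section
/- (Theorem 2) Let n ≥ 1 and let u₁,…,uₙ, v₁,…,vₙ ∈ ℝ³ be unit vectors. Let Oₙ := (1/√n) Σᵢ₌₁ⁿ (uᵢ·σ) ⊗ (vᵢ·σ) be the n-settings linear steering operator. Then there exist unitary 2×2 complex matrices U and V such that the maximally entangled state φ := (U ⊗ V) ((e₍₀,₀₎ + e₍₁,₁₎)/√2) satisfies: for every unit vector ψ ∈ ℂ^(Fin 2 × Fin 2), |⟨ψ, Oₙ ψ⟩| ≤ |⟨φ, Oₙ φ⟩|. That is, the maximum magnitude of the left-hand side of the n-settings linear steering inequality over all two-qubit states is achieved by a maximally entangled two-qubit state. -/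
open Matrix Kronecker Complex

/-!
`Oₙ` is Hermitian and commutes with the antiunitary spin flip `θ ψ = (σ₂ ⊗ σ₂) ψ̄`: for every
Pauli observable `σ₂ (a·σ)‾ σ₂ = -(a·σ)`, and the two signs cancel in `(u·σ) ⊗ (v·σ)`. Hence every
eigenspace of `Oₙ` is `θ`-invariant, and as `θ² = 1` it contains a unit vector `φ` with `θ φ = φ`.
The coefficient matrix of such a `φ` has the form `[[a, b], [b̄, -ā]]` with `|a|² + |b|² = 1/2`,
so `φ = (U ⊗ 1)((e₀₀ + e₁₁)/√2)` for the unitary `U = √2 [[a, b], [b̄, -ā]]`. Choosing `φ` in the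
eigenspace of an eigenvalue `λ` of largest modulus gives `⟨φ, Oₙ φ⟩ = λ`, while
`|⟨ψ, Oₙ ψ⟩| ≤ |λ|` for every unit vector `ψ` by the spectral theorem.
-/

open scoped ComplexConjugate

namespace Matrix

theorem map_star_mulVec_star {m n α : Type*} [Fintype n] [CommSemiring α] [StarRing α]
    (M : Matrix m n α) (v : n → α) : M.map star *ᵥ star v = star (M *ᵥ v) := by
  rw [star_mulVec, ← mulVec_transpose, conjTranspose_transpose]

theorem neg_kronecker_neg {l m n p α : Type*} [Mul α] [HasDistribNeg α]
    (A : Matrix l m α) (B : Matrix n p α) : (-A) ⊗ₖ (-B) = A ⊗ₖ B := by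
  ext; simp

theorem map_star_kronecker {l m n p α : Type*} [CommMagma α] [StarMul α]
    (A : Matrix l m α) (B : Matrix n p α) : (A ⊗ₖ B).map star = A.map star ⊗ₖ B.map star := by
  ext; simp [star_mul']

theorem IsHermitian.kronecker {m n α : Type*} [CommMagma α] [StarMul α] {A : Matrix m m α}
    {B : Matrix n n α} (hA : A.IsHermitian) (hB : B.IsHermitian) : (A ⊗ₖ B).IsHermitian := by
  rw [IsHermitian, conjTranspose_kronecker, hA.eq, hB.eq]

end Matrix

open scoped ComplexOrder in
theorem exists_ofReal_smul_dotProduct_eq_one {n : Type*} [Fintype n] {x : n → ℂ} (hx : x ≠ 0) :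
    ∃ t : ℝ, star ((t : ℂ) • x) ⬝ᵥ ((t : ℂ) • x) = 1 := by
  have hpos : 0 < star x ⬝ᵥ x := dotProduct_star_self_pos_iff.mpr hx
  obtain ⟨s, hs, hsx⟩ : ∃ s : ℝ, 0 < s ∧ star x ⬝ᵥ x = s :=
    ⟨_, (Complex.pos_iff.mp hpos).1, (Complex.ext rfl (Complex.pos_iff.mp hpos).2.symm)⟩
  refine ⟨(Real.sqrt s)⁻¹, ?_⟩
  rw [star_smul, smul_dotProduct, dotProduct_smul, hsx, Complex.star_def, conj_ofReal,
    smul_eq_mul, smul_eq_mul, ← ofReal_mul, ← ofReal_mul, ← mul_assoc, ← mul_inv,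
    Real.mul_self_sqrt hs.le, inv_mul_cancel₀ hs.ne', ofReal_one]

namespace Matrix.IsHermitian

variable {𝕜 n : Type*} [RCLike 𝕜] [Fintype n] [DecidableEq n] {A : Matrix n n 𝕜}
  (hA : A.IsHermitian)

theorem dotProduct_mulVec_eq_sum_eigenvalues (ψ : n → 𝕜) :
    star ψ ⬝ᵥ A *ᵥ ψ = ∑ i, (hA.eigenvalues i : 𝕜) *
      ‖(star (hA.eigenvectorUnitary : Matrix n n 𝕜) *ᵥ ψ) i‖ ^ 2 := by
  set c := star (hA.eigenvectorUnitary : Matrix n n 𝕜) *ᵥ ψ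
  have hc : star ψ ᵥ* (hA.eigenvectorUnitary : Matrix n n 𝕜) = star c := by
    rw [star_mulVec, star_eq_conjTranspose, conjTranspose_conjTranspose]
  conv_lhs => rw [hA.spectral_theorem, Unitary.conjStarAlgAut_apply]
  rw [← mulVec_mulVec, ← mulVec_mulVec, dotProduct_mulVec, hc]
  change star c ⬝ᵥ diagonal _ *ᵥ c = _
  simp only [dotProduct, mulVec_diagonal, Pi.star_apply, Function.comp_apply, ← RCLike.conj_mul,
    RCLike.star_def]
  exact Finset.sum_congr rfl fun i _ => by ring

theorem sum_norm_sq_star_eigenvectorUnitary_mulVec (ψ : n → 𝕜) :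
    ∑ i, (‖(star (hA.eigenvectorUnitary : Matrix n n 𝕜) *ᵥ ψ) i‖ ^ 2 : 𝕜) = star ψ ⬝ᵥ ψ := by
  set U := (hA.eigenvectorUnitary : Matrix n n 𝕜)
  calc ∑ i, (‖(star U *ᵥ ψ) i‖ ^ 2 : 𝕜) = star (star U *ᵥ ψ) ⬝ᵥ (star U *ᵥ ψ) := by
        simp only [dotProduct, Pi.star_apply, RCLike.star_def, RCLike.conj_mul]
    _ = star ψ ⬝ᵥ ψ := by
        rw [star_mulVec, ← star_eq_conjTranspose, star_star, ← dotProduct_mulVec, mulVec_mulVec,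
          Unitary.mul_star_self_of_mem hA.eigenvectorUnitary.2, one_mulVec]

theorem norm_dotProduct_mulVec_le {M : ℝ} (hM : ∀ i, |hA.eigenvalues i| ≤ M) {ψ : n → 𝕜}
    (hψ : star ψ ⬝ᵥ ψ = 1) : ‖star ψ ⬝ᵥ A *ᵥ ψ‖ ≤ M := by
  set c := star (hA.eigenvectorUnitary : Matrix n n 𝕜) *ᵥ ψ
  have hc : ∑ i, ‖c i‖ ^ 2 = 1 := by
    exact_mod_cast (hA.sum_norm_sq_star_eigenvectorUnitary_mulVec ψ).trans hψ
  calc ‖star ψ ⬝ᵥ A *ᵥ ψ‖ ≤ ∑ i, |hA.eigenvalues i| * ‖c i‖ ^ 2 := by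
        rw [hA.dotProduct_mulVec_eq_sum_eigenvalues]
        refine (norm_sum_le _ _).trans_eq (Finset.sum_congr rfl fun i _ => ?_)
        rw [norm_mul, norm_pow, RCLike.norm_ofReal, RCLike.norm_ofReal, abs_norm]
    _ ≤ ∑ i, M * ‖c i‖ ^ 2 := by gcongr; exact hM _
    _ = M := by rw [← Finset.mul_sum, hc, mul_one]

theorem exists_unit_eigenvector_forall_abs_eigenvalues_le [Nonempty n] :
    ∃ (r : ℝ) (x : n → 𝕜), A *ᵥ x = (r : 𝕜) • x ∧ star x ⬝ᵥ x = 1 ∧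
      ∀ i, |hA.eigenvalues i| ≤ |r| := by
  obtain ⟨i₀, hi₀⟩ := Finite.exists_max fun i => |hA.eigenvalues i|
  refine ⟨hA.eigenvalues i₀, hA.eigenvectorBasis i₀, ?_, ?_, hi₀⟩
  · rw [hA.mulVec_eigenvectorBasis, RCLike.real_smul_eq_coe_smul (K := 𝕜)]
  · rw [dotProduct_comm, ← EuclideanSpace.inner_eq_star_dotProduct, inner_self_eq_norm_sq_to_K,
      hA.eigenvectorBasis.orthonormal.1 i₀, RCLike.ofReal_one, one_pow]

end Matrix.IsHermitian

section AntiunitarySymmetry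

variable {n : Type*} [Fintype n] {A S : Matrix n n ℂ}

theorem mulVec_mulVec_star_of_eigenvector (hAS : A * S = S * A.map star) {r : ℝ} {x : n → ℂ}
    (hx : A *ᵥ x = (r : ℂ) • x) : A *ᵥ (S *ᵥ star x) = (r : ℂ) • (S *ᵥ star x) := by
  rw [mulVec_mulVec, hAS, ← mulVec_mulVec, map_star_mulVec_star, hx, star_smul, mulVec_smul,
    Complex.star_def, conj_ofReal]

theorem mulVec_star_mulVec_star [DecidableEq n] (hS : S * S.map star = 1) (x : n → ℂ) :
    S *ᵥ star (S *ᵥ star x) = x := by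
  rw [← map_star_mulVec_star, star_star, mulVec_mulVec, hS, one_mulVec]

-- `x + S x̄` is again an eigenvector, and it is fixed by `y ↦ S ȳ`; if it vanishes, `I x` is fixed.
theorem exists_eigenvector_mulVec_star_eq_self [DecidableEq n] (hAS : A * S = S * A.map star)
    (hS : S * S.map star = 1) {r : ℝ} {x : n → ℂ} (hx0 : x ≠ 0) (hx : A *ᵥ x = (r : ℂ) • x) :
    ∃ y ≠ 0, A *ᵥ y = (r : ℂ) • y ∧ S *ᵥ star y = y := by
  by_cases hsum : x + S *ᵥ star x = 0
  · refine ⟨I • x, smul_ne_zero I_ne_zero hx0, by rw [mulVec_smul, hx, smul_comm], ?_⟩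
    rw [star_smul, mulVec_smul, eq_neg_of_add_eq_zero_right hsum, Complex.star_def, conj_I,
      neg_smul, smul_neg, neg_neg]
  · refine ⟨x + S *ᵥ star x, hsum, ?_, ?_⟩
    · rw [mulVec_add, hx, mulVec_mulVec_star_of_eigenvector hAS hx, smul_add]
    · rw [star_add, mulVec_add, mulVec_star_mulVec_star hS, add_comm]

theorem exists_unit_eigenvector_mulVec_star_eq_self [DecidableEq n] (hAS : A * S = S * A.map star)
    (hS : S * S.map star = 1) {r : ℝ} {x : n → ℂ} (hx0 : x ≠ 0) (hx : A *ᵥ x = (r : ℂ) • x) :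
    ∃ y, A *ᵥ y = (r : ℂ) • y ∧ star y ⬝ᵥ y = 1 ∧ S *ᵥ star y = y := by
  obtain ⟨y, hy0, hy, hyS⟩ := exists_eigenvector_mulVec_star_eq_self hAS hS hx0 hx
  obtain ⟨t, ht⟩ := exists_ofReal_smul_dotProduct_eq_one hy0
  refine ⟨(t : ℂ) • y, by rw [mulVec_smul, hy, smul_comm], ht, ?_⟩
  rw [star_smul, mulVec_smul, hyS, Complex.star_def, conj_ofReal]

end AntiunitarySymmetry

theorem pauliDot_isHermitian (a : Fin 3 → ℝ) : (pauliDot a).IsHermitian := by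
  ext i j
  fin_cases i <;> fin_cases j <;> simp [pauliDot, σ1, σ2, σ3, conj_ofReal]

theorem pauliDot_mul_σ2 (a : Fin 3 → ℝ) :
    pauliDot a * σ2 = -(σ2 * (pauliDot a).map star) := by
  ext i j
  fin_cases i <;> fin_cases j <;>
    simp [pauliDot, σ1, σ2, σ3, Matrix.mul_apply, Matrix.vecMul, dotProduct, Fin.sum_univ_two,
      conj_ofReal] <;> ring

theorem σ2_mul_map_star : σ2 * σ2.map star = -1 := by
  ext i j
  fin_cases i <;> fin_cases j <;> simp [σ2, Matrix.mul_apply, Fin.sum_univ_two]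

noncomputable def spinFlip : Matrix (Fin 2 × Fin 2) (Fin 2 × Fin 2) ℂ := σ2 ⊗ₖ σ2

theorem spinFlip_mul_map_star : spinFlip * spinFlip.map star = 1 := by
  rw [spinFlip, map_star_kronecker, ← mul_kronecker_mul, σ2_mul_map_star, neg_kronecker_neg,
    one_kronecker_one]

theorem kronecker_mul_spinFlip {A B : Matrix (Fin 2) (Fin 2) ℂ}
    (hA : A * σ2 = -(σ2 * A.map star)) (hB : B * σ2 = -(σ2 * B.map star)) :
    (A ⊗ₖ B) * spinFlip = spinFlip * (A ⊗ₖ B).map star := by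
  rw [spinFlip, map_star_kronecker, ← mul_kronecker_mul, ← mul_kronecker_mul, hA, hB,
    neg_kronecker_neg]

section SteeringOperator

variable {ι : Type*} [Fintype ι] (c : ℝ) (u v : ι → Fin 3 → ℝ)

theorem isHermitian_smul_sum_kronecker_pauliDot :
    (((c : ℝ) : ℂ) • ∑ i, pauliDot (u i) ⊗ₖ pauliDot (v i)).IsHermitian :=
  IsHermitian.smul (isSelfAdjoint_sum _ fun _ _ =>
    ((pauliDot_isHermitian _).kronecker (pauliDot_isHermitian _)).isSelfAdjoint)
    (Complex.conj_ofReal c)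

theorem smul_sum_kronecker_pauliDot_mul_spinFlip :
    (((c : ℝ) : ℂ) • ∑ i, pauliDot (u i) ⊗ₖ pauliDot (v i)) * spinFlip =
      spinFlip * (((c : ℝ) : ℂ) • ∑ i, pauliDot (u i) ⊗ₖ pauliDot (v i)).map star := by
  have hmap : (((c : ℝ) : ℂ) • ∑ i, pauliDot (u i) ⊗ₖ pauliDot (v i)).map star =
      ((c : ℝ) : ℂ) • ∑ i, (pauliDot (u i) ⊗ₖ pauliDot (v i)).map star := by
    ext; simp [Matrix.sum_apply, conj_ofReal]
  rw [hmap, Matrix.smul_mul, Matrix.mul_smul, Finset.sum_mul, Finset.mul_sum]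
  simp only [kronecker_mul_spinFlip (pauliDot_mul_σ2 _) (pauliDot_mul_σ2 _)]

end SteeringOperator

noncomputable def bellState : Fin 2 × Fin 2 → ℂ :=
  (Real.sqrt 2)⁻¹ • (Pi.single (0, 0) 1 + Pi.single (1, 1) 1)

theorem kronecker_one_mulVec_bellState (M : Matrix (Fin 2) (Fin 2) ℂ) :
    (M ⊗ₖ 1) *ᵥ bellState = fun p => M p.1 p.2 / Real.sqrt 2 := by
  ext ⟨i, j⟩
  fin_cases i <;> fin_cases j <;>
    simp [bellState, mulVec, dotProduct, Fintype.sum_prod_type, Fin.sum_univ_two, Pi.single_apply,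
      div_eq_mul_inv]

theorem spinFlip_mulVec_star_apply (φ : Fin 2 × Fin 2 → ℂ) :
    (spinFlip *ᵥ star φ) (1, 0) = star (φ (0, 1)) ∧
      (spinFlip *ᵥ star φ) (1, 1) = -star (φ (0, 0)) := by
  simp [spinFlip, σ2, mulVec, dotProduct, Fintype.sum_prod_type, Fin.sum_univ_two]

theorem sqrt_two_smul_of_mem_unitaryGroup {φ : Fin 2 × Fin 2 → ℂ}
    (hφ : spinFlip *ᵥ star φ = φ) (hunit : star φ ⬝ᵥ φ = 1) :
    (Real.sqrt 2 : ℂ) • of (fun i j => φ (i, j)) ∈ unitaryGroup (Fin 2) ℂ := by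
  have hsqrt2 : (Real.sqrt 2 : ℂ) * Real.sqrt 2 = 2 := by
    rw [← ofReal_mul, Real.mul_self_sqrt zero_le_two, ofReal_ofNat]
  obtain ⟨h10, h11⟩ := spinFlip_mulVec_star_apply φ
  rw [hφ] at h10 h11
  simp only [dotProduct, Fintype.sum_prod_type, Fin.sum_univ_two, Pi.star_apply, h10, h11,
    Complex.star_def, conj_conj, map_neg] at hunit
  rw [mem_unitaryGroup_iff']
  ext i j
  fin_cases i <;> fin_cases j <;> simp [Matrix.mul_apply, Fin.sum_univ_two, h10, h11]
  · linear_combination hunit + (conj (φ (0, 0)) * φ (0, 0) + conj (φ (0, 1)) * φ (0, 1)) * hsqrt2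
  · ring
  · ring
  · linear_combination hunit + (conj (φ (0, 0)) * φ (0, 0) + conj (φ (0, 1)) * φ (0, 1)) * hsqrt2

theorem exists_unitary_kronecker_one_mulVec_bellState {φ : Fin 2 × Fin 2 → ℂ}
    (hφ : spinFlip *ᵥ star φ = φ) (hunit : star φ ⬝ᵥ φ = 1) :
    ∃ U ∈ unitaryGroup (Fin 2) ℂ, (U ⊗ₖ 1) *ᵥ bellState = φ := by
  refine ⟨_, sqrt_two_smul_of_mem_unitaryGroup hφ hunit, ?_⟩
  rw [kronecker_one_mulVec_bellState]
  ext p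
  simp [mul_div_cancel_left₀]

theorem max_entangled_maximizes_n_settings_steering_general (n : ℕ)
    (u v : Fin n → Fin 3 → ℝ)
    (On : Matrix (Fin 2 × Fin 2) (Fin 2 × Fin 2) ℂ)
    (hOn : On = ((1 / Real.sqrt n : ℝ) : ℂ) • ∑ i, pauliDot (u i) ⊗ₖ pauliDot (v i)) :
    ∃ U V : Matrix (Fin 2) (Fin 2) ℂ,
      U ∈ Matrix.unitaryGroup (Fin 2) ℂ ∧ V ∈ Matrix.unitaryGroup (Fin 2) ℂ ∧
      ∀ ψ : (Fin 2 × Fin 2) → ℂ, star ψ ⬝ᵥ ψ = 1 →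
        ‖(star ψ ⬝ᵥ On.mulVec ψ)‖
          ≤ ‖(star ((U ⊗ₖ V).mulVec ((Real.sqrt 2)⁻¹ •
              ((Pi.single ((0 : Fin 2), (0 : Fin 2)) (1 : ℂ) : (Fin 2 × Fin 2) → ℂ)
                + (Pi.single ((1 : Fin 2), (1 : Fin 2)) (1 : ℂ) : (Fin 2 × Fin 2) → ℂ))))
            ⬝ᵥ On.mulVec ((U ⊗ₖ V).mulVec ((Real.sqrt 2)⁻¹ •
              ((Pi.single ((0 : Fin 2), (0 : Fin 2)) (1 : ℂ) : (Fin 2 × Fin 2) → ℂ)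
                + (Pi.single ((1 : Fin 2), (1 : Fin 2)) (1 : ℂ) : (Fin 2 × Fin 2) → ℂ)))))‖ := by
  have hH : On.IsHermitian := hOn ▸ isHermitian_smul_sum_kronecker_pauliDot _ u v
  have hθ : On * spinFlip = spinFlip * On.map star :=
    hOn ▸ smul_sum_kronecker_pauliDot_mul_spinFlip _ u v
  obtain ⟨r, x, hx, hx1, hmax⟩ := hH.exists_unit_eigenvector_forall_abs_eigenvalues_le
  obtain ⟨φ, hφ, hφ1, hφθ⟩ := exists_unit_eigenvector_mulVec_star_eq_self hθ
    spinFlip_mul_map_star (by rintro rfl; simp at hx1) hx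
  obtain ⟨U, hU, hUφ⟩ := exists_unitary_kronecker_one_mulVec_bellState hφθ hφ1
  refine ⟨U, 1, hU, one_mem _, fun ψ hψ => ?_⟩
  change _ ≤ ‖star ((U ⊗ₖ 1) *ᵥ bellState) ⬝ᵥ On *ᵥ ((U ⊗ₖ 1) *ᵥ bellState)‖
  rw [hUφ, hφ, dotProduct_smul, hφ1, smul_eq_mul, mul_one, norm_real, Real.norm_eq_abs]
  exact hH.norm_dotProduct_mulVec_le hmax hψ

/-- Theorem 2: for any unit vectors `u₁,…,uₙ, v₁,…,vₙ ∈ ℝ³`, the maximum magnitude of the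
left-hand side of the `n`-settings linear steering inequality over all two-qubit pure states is
achieved by a maximally entangled two-qubit state `(U ⊗ V)((|00⟩ + |11⟩)/√2)`. -/
theorem max_entangled_maximizes_n_settings_steering (n : ℕ) (hn : 1 ≤ n)
    (u v : Fin n → Fin 3 → ℝ)
    (hu : ∀ i, u i ⬝ᵥ u i = 1) (hv : ∀ i, v i ⬝ᵥ v i = 1)
    (On : Matrix (Fin 2 × Fin 2) (Fin 2 × Fin 2) ℂ)
    (hOn : On = ((1 / Real.sqrt n : ℝ) : ℂ) • ∑ i, pauliDot (u i) ⊗ₖ pauliDot (v i)) :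
    ∃ U V : Matrix (Fin 2) (Fin 2) ℂ,
      U ∈ Matrix.unitaryGroup (Fin 2) ℂ ∧ V ∈ Matrix.unitaryGroup (Fin 2) ℂ ∧
      ∀ ψ : (Fin 2 × Fin 2) → ℂ, star ψ ⬝ᵥ ψ = 1 →
        ‖(star ψ ⬝ᵥ On.mulVec ψ)‖
          ≤ ‖(star ((U ⊗ₖ V).mulVec ((Real.sqrt 2)⁻¹ •
              ((Pi.single ((0 : Fin 2), (0 : Fin 2)) (1 : ℂ) : (Fin 2 × Fin 2) → ℂ)
                + (Pi.single ((1 : Fin 2), (1 : Fin 2)) (1 : ℂ) : (Fin 2 × Fin 2) → ℂ))))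
            ⬝ᵥ On.mulVec ((U ⊗ₖ V).mulVec ((Real.sqrt 2)⁻¹ •
              ((Pi.single ((0 : Fin 2), (0 : Fin 2)) (1 : ℂ) : (Fin 2 × Fin 2) → ℂ)
                + (Pi.single ((1 : Fin 2), (1 : Fin 2)) (1 : ℂ) : (Fin 2 × Fin 2) → ℂ)))))‖ :=
  max_entangled_maximizes_n_settings_steering_general n u v On hOn
end
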